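/- arXiv:1002.4983 — 2 statements merged into one kernel-verified Lean document; each statement's English description precedes it below -/
import Mathlib

section
/- In the quotient setting, the value B(x,y) does not depend on the choice of y with X^{k−1}(y) = x, and the following dimension formulas hold. For every integer a with 1 ≤ a ≤ k−2: if a is odd then dim(Ker Z^a ∩ W_ε) = dim(Ker X^a ∩ V_ε) − 1 and dim(Ker Z^a ∩ W_{1−ε}) = dim(Ker X^a ∩ V_{1−ε}) + 1, while if a is even both dimensions are unchanged: dim(Ker Z^a ∩ W_δ) = dim(Ker X^a ∩ V_δ) for δ = ε, 1−ε. For a = k−1 ≥ 1: if B(x,y) ≠ 0 then dim(Ker Z^{k−1} ∩ W_ε) = dim(Ker X^{k−1} ∩ V_ε) − 1 and dim(Ker Z^{k−1} ∩ W_{1−ε}) = dim(Ker X^{k−1} ∩ V_{1−ε}); if B(x,y) = 0 and k−1 is odd then dim(Ker Z^{k−1} ∩ W_ε) = dim(Ker X^{k−1} ∩ V_ε) − 1 and dim(Ker Z^{k−1} ∩ W_{1−ε}) = dim(Ker X^{k−1} ∩ V_{1−ε}) + 1; if B(x,y) = 0 and k−1 is even then both dimensions are unchanged. -/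
/-!
Put `P = x^⊥` and `Q_δ = V_δ ∩ (X^a)⁻¹(ℂx)`. Since `Z` is induced by `X`, the classes of
`P ∩ Q_δ` in `W` are exactly `Ker Z^a ∩ W_δ`, and the kernel of this map is `ℂx ∩ V_δ`, so
`dim(Ker Z^a ∩ W_δ) + [δ = ε] = dim(P ∩ Q_δ)`. Rank–nullity for `X^a` on `Q_δ` gives
`dim Q_δ = dim(Ker X^a ∩ V_δ) + [x ∈ X^a(V_δ)]`; as `X^a` shifts the parity by `a` and
`x ∈ Im X^a` for `a ≤ k - 1`, the last bracket is `[δ + a = ε]`.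

It remains to compare `P ∩ Q_δ` with `Q_δ`. The operator `X` is `B`-adjoint to `X ∘ S`, where `S`
is the parity operator, and `X ∘ S` kills `Ker X^m` after `m` steps; hence `B(X^m p, q) = 0`
whenever `X^m q = 0`, and `X^{k-1} p = c x` forces `B(x, p) = c B(x, y)`. Thus `B(x, y)` does
not depend on `y`, `Q_δ ⊆ P` when `a < k - 1` or `B(x, y) = 0`, and
`P ∩ Q_δ = Ker X^{k-1} ∩ V_δ` when `a = k - 1` and `B(x, y) ≠ 0`.
-/

/-- The bilinear super-symmetric form `B` on `V = V₀ × V₁` associated to a nondegenerate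
symmetric bilinear form `φ` on `V₀` and a nondegenerate alternating bilinear form `ψ`
on `V₁`: `B((v,w),(v',w')) = φ(v,v') + ψ(w,w')`. -/
def Bform {V₀ V₁ : Type} [AddCommGroup V₀] [Module ℂ V₀] [AddCommGroup V₁] [Module ℂ V₁]
    (φ : V₀ →ₗ[ℂ] V₀ →ₗ[ℂ] ℂ) (ψ : V₁ →ₗ[ℂ] V₁ →ₗ[ℂ] ℂ) (p q : V₀ × V₁) : ℂ :=
  φ p.1 q.1 + ψ p.2 q.2

/-- The graded pieces of `V = V₀ × V₁`: `Vgr V₀ V₁ false = V₀ × 0` (even part) and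
`Vgr V₀ V₁ true = 0 × V₁` (odd part). -/
def Vgr (V₀ V₁ : Type) [AddCommGroup V₀] [Module ℂ V₀] [AddCommGroup V₁] [Module ℂ V₁]
    (ε : Bool) : Submodule ℂ (V₀ × V₁) :=
  if ε then Submodule.prod ⊥ ⊤ else Submodule.prod ⊤ ⊥

/-- The `B`-orthogonal complement `x^⊥ = {z : B(x,z) = 0}` of a vector `x ∈ V₀ × V₁`. -/
noncomputable def perp {V₀ V₁ : Type} [AddCommGroup V₀] [Module ℂ V₀] [AddCommGroup V₁] [Module ℂ V₁]
    (φ : V₀ →ₗ[ℂ] V₀ →ₗ[ℂ] ℂ) (ψ : V₁ →ₗ[ℂ] V₁ →ₗ[ℂ] ℂ) (x : V₀ × V₁) :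
    Submodule ℂ (V₀ × V₁) :=
  LinearMap.ker ((φ x.1).comp (LinearMap.fst ℂ V₀ V₁) + (ψ x.2).comp (LinearMap.snd ℂ V₀ V₁))

open Module Submodule

section LinearAlgebra

variable {K V V' : Type*} [Field K] [AddCommGroup V] [Module K V] [AddCommGroup V'] [Module K V']

theorem Submodule.finrank_comap_subtype (P U : Submodule K V) :
    finrank K (U.comap P.subtype) = finrank K ↥(P ⊓ U) := by
  rw [(P.equivSubtypeMap (U.comap P.subtype)).finrank_eq, map_comap_subtype]

theorem Submodule.finrank_map_add_finrank_ker_inf [FiniteDimensional K V] (f : V →ₗ[K] V')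
    (G : Submodule K V) :
    finrank K (G.map f) + finrank K ↥(LinearMap.ker f ⊓ G) = finrank K G := by
  rw [← LinearMap.range_domRestrict, inf_comm, ← finrank_comap_subtype,
    ← LinearMap.ker_domRestrict]
  exact (f.domRestrict G).finrank_range_add_finrank_ker

theorem Submodule.finrank_inf_comap [FiniteDimensional K V] (f : V →ₗ[K] V')
    (G : Submodule K V) (U : Submodule K V') :
    finrank K ↥(G ⊓ U.comap f) =
      finrank K ↥(LinearMap.ker f ⊓ G) + finrank K ↥(G.map f ⊓ U) := by
  have hle : LinearMap.ker f ≤ U.comap f := comap_mono bot_le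
  have hker : LinearMap.ker f ⊓ (G ⊓ U.comap f) = LinearMap.ker f ⊓ G := by
    rw [inf_comm G, ← inf_assoc, inf_eq_left.2 hle]
  rw [← finrank_map_add_finrank_ker_inf f, hker, map_inf_eq_map_inf_comap, add_comm]

open scoped Classical in
theorem Submodule.finrank_inf_span_singleton {x : V} (hx : x ≠ 0) (U : Submodule K V) :
    finrank K ↥(U ⊓ K ∙ x) = if x ∈ U then 1 else 0 := by
  split_ifs with h
  · rw [inf_eq_right.2 ((span_singleton_le_iff_mem _ _).2 h), finrank_span_singleton hx]
  · rw [((disjoint_span_singleton' hx).2 h).eq_bot, finrank_bot]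

theorem Submodule.pow_apply_mkQ {P : Submodule K V} {L : Submodule K P} {N : V →ₗ[K] V}
    (hN : ∀ z ∈ P, N z ∈ P) {Z : Module.End K (P ⧸ L)}
    (hZ : ∀ z w : P, (w : V) = N z → Z (L.mkQ z) = L.mkQ w) (m : ℕ) :
    ∀ z w : P, (w : V) = (N ^ m) z → (Z ^ m) (L.mkQ z) = L.mkQ w := by
  induction m with
  | zero => intro z w h; simp [Subtype.ext h]
  | succ m ih =>
    intro z w h
    rw [pow_succ, Module.End.mul_apply, hZ z ⟨N z, hN z z.2⟩ rfl]
    exact ih _ w (by rw [h, pow_succ, Module.End.mul_apply])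

theorem Submodule.ker_inf_map_mkQ {P U : Submodule K V} {N : V →ₗ[K] V} (hN : ∀ z ∈ P, N z ∈ P)
    {Z : Module.End K (P ⧸ U.comap P.subtype)}
    (hZ : ∀ z w : P, (w : V) = N z → Z (mkQ _ z) = mkQ _ w) (G : Submodule K V) :
    LinearMap.ker Z ⊓ (G.comap P.subtype).map (mkQ _) =
      ((G ⊓ U.comap N).comap P.subtype).map (mkQ _) := by
  have hZz : ∀ z : P, Z (mkQ _ z) = 0 ↔ N z ∈ U := fun z => by
    rw [hZ z ⟨N z, hN z z.2⟩ rfl, mkQ_apply, Quotient.mk_eq_zero, mem_comap, coe_subtype]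
  ext w
  simp only [mem_inf, LinearMap.mem_ker, mem_map, mem_comap]
  constructor
  · rintro ⟨hw, z, hz, rfl⟩
    exact ⟨z, ⟨hz, (hZz z).1 hw⟩, rfl⟩
  · rintro ⟨z, ⟨hz, hzU⟩, rfl⟩
    exact ⟨(hZz z).2 hzU, z, hz, rfl⟩

theorem Submodule.finrank_ker_inf_map_mkQ_add [FiniteDimensional K V] {P : Submodule K V}
    {x : V} (hxP : x ∈ P) {N : V →ₗ[K] V} (hN : ∀ z ∈ P, N z ∈ P) (hNx : N x = 0)
    {Z : Module.End K (P ⧸ (K ∙ x).comap P.subtype)}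
    (hZ : ∀ z w : P, (w : V) = N z → Z (mkQ _ z) = mkQ _ w) (G : Submodule K V) :
    finrank K ↥(LinearMap.ker Z ⊓ (G.comap P.subtype).map (mkQ _)) +
        finrank K ↥(G ⊓ K ∙ x) = finrank K ↥(P ⊓ (G ⊓ (K ∙ x).comap N)) := by
  have hxN : K ∙ x ≤ (K ∙ x).comap N := (span_singleton_le_iff_mem _ _).2 (by simp [hNx])
  have hxP' : K ∙ x ≤ P := (span_singleton_le_iff_mem _ _).2 hxP
  have hinf : P ⊓ ((K ∙ x) ⊓ (G ⊓ (K ∙ x).comap N)) = G ⊓ K ∙ x := by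
    rw [inf_left_comm (K ∙ x), inf_eq_left.2 hxN, inf_eq_right.2 (inf_le_right.trans hxP')]
  have h := finrank_map_add_finrank_ker_inf ((K ∙ x).comap P.subtype).mkQ
    ((G ⊓ (K ∙ x).comap N).comap P.subtype)
  rwa [ker_mkQ, ← comap_inf, finrank_comap_subtype, finrank_comap_subtype, hinf,
    ← ker_inf_map_mkQ hN hZ] at h

end LinearAlgebra

section Super

variable {V₀ V₁ : Type} [AddCommGroup V₀] [Module ℂ V₀] [AddCommGroup V₁] [Module ℂ V₁]

theorem mem_Vgr_false {p : V₀ × V₁} : p ∈ Vgr V₀ V₁ false ↔ p.2 = 0 := by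
  simp [Vgr, mem_prod]

theorem mem_Vgr_true {p : V₀ × V₁} : p ∈ Vgr V₀ V₁ true ↔ p.1 = 0 := by
  simp [Vgr, mem_prod]

theorem isCompl_Vgr (δ : Bool) : IsCompl (Vgr V₀ V₁ δ) (Vgr V₀ V₁ !δ) := by
  have h : IsCompl (prod ⊤ ⊥ : Submodule ℂ (V₀ × V₁)) (prod ⊥ ⊤) :=
    ⟨disjoint_iff.2 (by rw [prod_inf_prod]; simp), codisjoint_iff.2 (by rw [prod_sup_prod]; simp)⟩
  cases δ
  exacts [h, h.symm]

theorem eq_of_mem_Vgr {p : V₀ × V₁} (hp : p ≠ 0) {δ δ' : Bool} (h : p ∈ Vgr V₀ V₁ δ)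
    (h' : p ∈ Vgr V₀ V₁ δ') : δ = δ' := by
  by_contra hne
  obtain rfl : δ' = !δ := by cases δ <;> cases δ' <;> simp_all
  exact hp ((isCompl_Vgr δ).disjoint.le_bot ⟨h, h'⟩)

theorem mem_Vgr_iff_eq {p : V₀ × V₁} (hp : p ≠ 0) {ε : Bool} (hε : p ∈ Vgr V₀ V₁ ε) (δ : Bool) :
    p ∈ Vgr V₀ V₁ δ ↔ δ = ε :=
  ⟨fun h => eq_of_mem_Vgr hp h hε, fun h => h ▸ hε⟩

theorem pow_apply_mem_Vgr {X : Module.End ℂ (V₀ × V₁)}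
    (hodd : ∀ δ p, p ∈ Vgr V₀ V₁ δ → X p ∈ Vgr V₀ V₁ !δ) (a : ℕ) {δ : Bool} {p : V₀ × V₁}
    (hp : p ∈ Vgr V₀ V₁ δ) : (X ^ a) p ∈ Vgr V₀ V₁ (xor δ (decide (Odd a))) := by
  induction a with
  | zero => simpa using hp
  | succ a ih =>
    rw [pow_succ', Module.End.mul_apply]
    convert hodd _ _ ih using 2
    simp only [Nat.odd_add_one, decide_not, Bool.xor_not]

theorem mem_map_pow_Vgr_iff {X : Module.End ℂ (V₀ × V₁)}
    (hodd : ∀ δ p, p ∈ Vgr V₀ V₁ δ → X p ∈ Vgr V₀ V₁ !δ) {a : ℕ} {x : V₀ × V₁} (hx0 : x ≠ 0)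
    {ε : Bool} (hxε : x ∈ Vgr V₀ V₁ ε) (hx : x ∈ LinearMap.range (X ^ a)) (δ : Bool) :
    x ∈ (Vgr V₀ V₁ δ).map (X ^ a) ↔ xor δ (decide (Odd a)) = ε := by
  constructor
  · rintro ⟨p, hp, rfl⟩
    exact eq_of_mem_Vgr hx0 (pow_apply_mem_Vgr hodd a hp) hxε
  · intro h
    obtain ⟨q, rfl⟩ := hx
    have hq : q ∈ Vgr V₀ V₁ δ ⊔ Vgr V₀ V₁ !δ := by rw [(isCompl_Vgr δ).sup_eq_top]; trivial
    obtain ⟨q₀, hq₀, q₁, hq₁, rfl⟩ := mem_sup.1 hq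
    have h₀ : (X ^ a) q₀ ∈ Vgr V₀ V₁ ε := h ▸ pow_apply_mem_Vgr hodd a hq₀
    have h₁ : (X ^ a) q₁ ∈ Vgr V₀ V₁ !ε := by
      convert pow_apply_mem_Vgr hodd a hq₁ using 2
      rw [← h, Bool.not_xor]
    have h₁' : (X ^ a) q₁ ∈ Vgr V₀ V₁ ε := by
      simpa using sub_mem hxε h₀
    have hzero : (X ^ a) q₁ = 0 := (isCompl_Vgr ε).disjoint.le_bot ⟨h₁', h₁⟩
    exact ⟨q₀, hq₀, by rw [map_add, hzero, add_zero]⟩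

open scoped Classical in
theorem finrank_Vgr_inf_comap_pow_span [FiniteDimensional ℂ V₀] [FiniteDimensional ℂ V₁]
    {X : Module.End ℂ (V₀ × V₁)} (hodd : ∀ δ p, p ∈ Vgr V₀ V₁ δ → X p ∈ Vgr V₀ V₁ !δ) {a : ℕ}
    {x : V₀ × V₁} (hx0 : x ≠ 0) {ε : Bool} (hxε : x ∈ Vgr V₀ V₁ ε)
    (hx : x ∈ LinearMap.range (X ^ a)) (δ : Bool) :
    finrank ℂ ↥(Vgr V₀ V₁ δ ⊓ (ℂ ∙ x).comap (X ^ a)) =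
      finrank ℂ ↥(LinearMap.ker (X ^ a) ⊓ Vgr V₀ V₁ δ) +
        if xor δ (decide (Odd a)) = ε then 1 else 0 := by
  rw [finrank_inf_comap, finrank_inf_span_singleton hx0]
  simp only [mem_map_pow_Vgr_iff hodd hx0 hxε hx]

end Super

section Adjoint

variable {V₀ V₁ : Type} [AddCommGroup V₀] [Module ℂ V₀] [AddCommGroup V₁] [Module ℂ V₁]
  {φ : V₀ →ₗ[ℂ] V₀ →ₗ[ℂ] ℂ} {ψ : V₁ →ₗ[ℂ] V₁ →ₗ[ℂ] ℂ}

theorem mem_perp_iff {x z : V₀ × V₁} : z ∈ perp φ ψ x ↔ Bform φ ψ x z = 0 := Iff.rfl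

theorem Bform_sub_right (x p q : V₀ × V₁) :
    Bform φ ψ x (p - q) = Bform φ ψ x p - Bform φ ψ x q := by
  simp only [Bform, Prod.fst_sub, Prod.snd_sub, map_sub]
  ring

theorem Bform_smul_right (x p : V₀ × V₁) (c : ℂ) : Bform φ ψ x (c • p) = c * Bform φ ψ x p := by
  simp only [Bform, Prod.smul_fst, Prod.smul_snd, map_smul, smul_eq_mul]
  ring

variable (V₀ V₁) in
def parity : Module.End ℂ (V₀ × V₁) := LinearMap.prodMap LinearMap.id (-LinearMap.id)

theorem parity_apply (p : V₀ × V₁) : parity V₀ V₁ p = (p.1, -p.2) := rfl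

variable {u : V₀ →ₗ[ℂ] V₁} {ustar : V₁ →ₗ[ℂ] V₀} {X : Module.End ℂ (V₀ × V₁)}
  (hX : ∀ p : V₀ × V₁, X p = (ustar p.2, u p.1))
include hX

theorem apply_mem_Vgr_not (δ : Bool) (p : V₀ × V₁) (hp : p ∈ Vgr V₀ V₁ δ) :
    X p ∈ Vgr V₀ V₁ !δ := by
  cases δ <;> simp_all [mem_Vgr_false, mem_Vgr_true]

theorem apply_parity (p : V₀ × V₁) :
    X (parity V₀ V₁ p) = -parity V₀ V₁ (X p) := by
  simp [hX, parity_apply]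

theorem pow_apply_parity (m : ℕ) (p : V₀ × V₁) :
    (X ^ m) (parity V₀ V₁ p) = (-1 : ℂ) ^ m • parity V₀ V₁ ((X ^ m) p) := by
  induction m with
  | zero => simp
  | succ m ih =>
    rw [pow_succ', Module.End.mul_apply, ih, map_smul, apply_parity hX, pow_succ',
      Module.End.mul_apply, smul_neg, ← neg_smul, neg_one_mul]

theorem pow_mul_parity_apply_eq_zero {m : ℕ} {q : V₀ × V₁} (hq : (X ^ m) q = 0) :
    ((X * parity V₀ V₁) ^ m) q = 0 := by
  induction m generalizing q with
  | zero => simpa using hq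
  | succ m ih =>
    rw [pow_succ, Module.End.mul_apply]
    refine ih ?_
    rw [Module.End.mul_apply, ← Module.End.mul_apply (X ^ m), ← pow_succ, pow_apply_parity hX, hq,
      map_zero, smul_zero]

variable (hφ : ∀ a b : V₀, φ a b = φ b a) (hψ : ψ.IsAlt)
  (hadj : ∀ (v : V₀) (w : V₁), φ (ustar w) v = ψ w (u v))
include hφ hψ hadj

theorem Bform_apply_left (p q : V₀ × V₁) :
    Bform φ ψ (X p) q = Bform φ ψ p ((X * parity V₀ V₁) q) := by
  simp only [Bform, Module.End.mul_apply, parity_apply, hX, map_neg]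
  linear_combination hadj q.1 p.2 + hφ p.1 (ustar q.2) + hadj p.1 q.2 - hψ.neg (u p.1) q.2

theorem Bform_apply_right (p q : V₀ × V₁) :
    Bform φ ψ p (X q) = -Bform φ ψ ((X * parity V₀ V₁) p) q := by
  simp only [Bform, Module.End.mul_apply, parity_apply, hX, map_neg, LinearMap.neg_apply]
  linear_combination hφ p.1 (ustar q.2) + hadj p.1 q.2 - hψ.neg (u p.1) q.2 - hadj q.1 p.2

theorem Bform_pow_apply_left (m : ℕ) (p q : V₀ × V₁) :
    Bform φ ψ ((X ^ m) p) q = Bform φ ψ p (((X * parity V₀ V₁) ^ m) q) := by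
  induction m generalizing p with
  | zero => rfl
  | succ m ih =>
    rw [pow_succ, Module.End.mul_apply, ih, Bform_apply_left hX hφ hψ hadj, ← Module.End.mul_apply,
      ← pow_succ']

theorem Bform_pow_apply_eq_zero {m : ℕ} {q : V₀ × V₁} (hq : (X ^ m) q = 0) (p : V₀ × V₁) :
    Bform φ ψ ((X ^ m) p) q = 0 := by
  rw [Bform_pow_apply_left hX hφ hψ hadj, pow_mul_parity_apply_eq_zero hX hq]
  simp [Bform]

theorem apply_mem_perp {x : V₀ × V₁} (hXx : X x = 0) (z : V₀ × V₁) : X z ∈ perp φ ψ x := by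
  rw [mem_perp_iff, Bform_apply_right hX hφ hψ hadj, Module.End.mul_apply, apply_parity hX, hXx]
  simp [Bform]

theorem Bform_eq_mul_of_pow_apply_eq_smul {n : ℕ} {x y p : V₀ × V₁} (hxy : x = (X ^ n) y) {c : ℂ}
    (hp : (X ^ n) p = c • x) : Bform φ ψ x p = c * Bform φ ψ x y := by
  have h : Bform φ ψ x (p - c • y) = 0 := by
    rw [hxy]
    exact Bform_pow_apply_eq_zero hX hφ hψ hadj (by rw [map_sub, map_smul, hp, hxy, sub_self]) y
  rwa [Bform_sub_right, Bform_smul_right, sub_eq_zero] at h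

theorem comap_pow_span_le_perp {n a : ℕ} {x y : V₀ × V₁} (hxy : x = (X ^ n) y) (hXx : X x = 0)
    (ha : a ≤ n) (h : a < n ∨ Bform φ ψ x y = 0) : (ℂ ∙ x).comap (X ^ a) ≤ perp φ ψ x := by
  intro p hp
  obtain ⟨c, hc⟩ := mem_span_singleton.1 hp
  rw [mem_perp_iff]
  rcases ha.lt_or_eq with hlt | rfl
  · have hpn : (X ^ n) p = (0 : ℂ) • x := by
      obtain ⟨j, rfl⟩ := Nat.exists_eq_add_of_lt hlt
      rw [zero_smul, show a + j + 1 = j + 1 + a by omega, pow_add, Module.End.mul_apply, ← hc,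
        map_smul, Module.End.pow_map_zero_of_le (Nat.le_add_left 1 j) (by simpa using hXx),
        smul_zero]
    rw [Bform_eq_mul_of_pow_apply_eq_smul hX hφ hψ hadj hxy hpn, zero_mul]
  · rw [Bform_eq_mul_of_pow_apply_eq_smul hX hφ hψ hadj hxy hc.symm, h.resolve_left (lt_irrefl _),
      mul_zero]

theorem perp_inf_comap_pow_span {n : ℕ} {x y : V₀ × V₁} (hxy : x = (X ^ n) y)
    (hB : Bform φ ψ x y ≠ 0) (G : Submodule ℂ (V₀ × V₁)) :
    perp φ ψ x ⊓ (G ⊓ (ℂ ∙ x).comap (X ^ n)) = LinearMap.ker (X ^ n) ⊓ G := by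
  ext p
  simp only [mem_inf, mem_perp_iff, mem_comap, mem_span_singleton, LinearMap.mem_ker]
  constructor
  · rintro ⟨hp, hpG, c, hc⟩
    rw [Bform_eq_mul_of_pow_apply_eq_smul hX hφ hψ hadj hxy hc.symm, mul_eq_zero,
      or_iff_left hB] at hp
    rw [← hc, hp, zero_smul]
    exact ⟨rfl, hpG⟩
  · rintro ⟨hp, hpG⟩
    refine ⟨?_, hpG, 0, by rw [zero_smul, hp]⟩
    rw [hxy]
    exact Bform_pow_apply_eq_zero hX hφ hψ hadj hp y

end Adjoint

section QuotientSetting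

variable {V₀ V₁ : Type} [AddCommGroup V₀] [Module ℂ V₀] [FiniteDimensional ℂ V₀]
  [AddCommGroup V₁] [Module ℂ V₁] [FiniteDimensional ℂ V₁]
  {φ : V₀ →ₗ[ℂ] V₀ →ₗ[ℂ] ℂ} {ψ : V₁ →ₗ[ℂ] V₁ →ₗ[ℂ] ℂ} {u : V₀ →ₗ[ℂ] V₁} {ustar : V₁ →ₗ[ℂ] V₀}
  {X : Module.End ℂ (V₀ × V₁)} (hX : ∀ p : V₀ × V₁, X p = (ustar p.2, u p.1))
  (hφ : ∀ a b : V₀, φ a b = φ b a) (hψ : ψ.IsAlt)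
  (hadj : ∀ (v : V₀) (w : V₁), φ (ustar w) v = ψ w (u v))
  {n : ℕ} {x y : V₀ × V₁} (hxy : x = (X ^ n) y) (hXx : X x = 0) (hx0 : x ≠ 0)
  {ε : Bool} (hxε : x ∈ Vgr V₀ V₁ ε) (hiso : Bform φ ψ x x = 0)
  {Wg : Bool → Submodule ℂ (perp φ ψ x ⧸ (ℂ ∙ x).comap (perp φ ψ x).subtype)}
  (hWg : ∀ δ, Wg δ = ((Vgr V₀ V₁ δ).comap (perp φ ψ x).subtype).map (mkQ _))
  {Z : Module.End ℂ (perp φ ψ x ⧸ (ℂ ∙ x).comap (perp φ ψ x).subtype)}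
  (hZ : ∀ z w : perp φ ψ x, (w : V₀ × V₁) = X z → Z (mkQ _ z) = mkQ _ w)

include hX hφ hψ hadj hXx hx0 hxε hiso hWg hZ

theorem finrank_ker_pow_inf_Wg_add {a : ℕ} (ha : 1 ≤ a) (δ : Bool) :
    finrank ℂ ↥(LinearMap.ker (Z ^ a) ⊓ Wg δ) + (if δ = ε then 1 else 0) =
      finrank ℂ ↥(perp φ ψ x ⊓ (Vgr V₀ V₁ δ ⊓ (ℂ ∙ x).comap (X ^ a))) := by
  have hXP : ∀ z ∈ perp φ ψ x, X z ∈ perp φ ψ x :=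
    fun z _ => apply_mem_perp hX hφ hψ hadj hXx z
  have hXaP : ∀ z ∈ perp φ ψ x, (X ^ a) z ∈ perp φ ψ x := fun z _ => by
    obtain ⟨b, rfl⟩ := Nat.exists_eq_add_of_le' ha
    rw [pow_succ', Module.End.mul_apply]
    exact apply_mem_perp hX hφ hψ hadj hXx _
  have h := finrank_ker_inf_map_mkQ_add (mem_perp_iff.2 hiso) hXaP
    (Module.End.pow_map_zero_of_le ha (by simpa using hXx)) (pow_apply_mkQ hXP hZ a)
    (Vgr V₀ V₁ δ)
  rw [finrank_inf_span_singleton hx0, ← hWg] at h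
  simpa only [mem_Vgr_iff_eq hx0 hxε] using h

include hxy

theorem finrank_ker_pow_quotient_of_le_perp {a : ℕ} (ha1 : 1 ≤ a) (ha : a ≤ n)
    (h : a < n ∨ Bform φ ψ x y = 0) :
    (Odd a →
      finrank ℂ ↥(LinearMap.ker (Z ^ a) ⊓ Wg ε) + 1 =
        finrank ℂ ↥(LinearMap.ker (X ^ a) ⊓ Vgr V₀ V₁ ε) ∧
      finrank ℂ ↥(LinearMap.ker (Z ^ a) ⊓ Wg (!ε)) =
        finrank ℂ ↥(LinearMap.ker (X ^ a) ⊓ Vgr V₀ V₁ (!ε)) + 1) ∧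
    (Even a →
      finrank ℂ ↥(LinearMap.ker (Z ^ a) ⊓ Wg ε) =
        finrank ℂ ↥(LinearMap.ker (X ^ a) ⊓ Vgr V₀ V₁ ε) ∧
      finrank ℂ ↥(LinearMap.ker (Z ^ a) ⊓ Wg (!ε)) =
        finrank ℂ ↥(LinearMap.ker (X ^ a) ⊓ Vgr V₀ V₁ (!ε))) := by
  have hxa : x ∈ LinearMap.range (X ^ a) :=
    ⟨(X ^ (n - a)) y, by rw [hxy, ← Module.End.mul_apply, ← pow_add, Nat.add_sub_cancel' ha]⟩
  have key : ∀ δ, finrank ℂ ↥(LinearMap.ker (Z ^ a) ⊓ Wg δ) + (if δ = ε then 1 else 0) =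
      finrank ℂ ↥(LinearMap.ker (X ^ a) ⊓ Vgr V₀ V₁ δ) +
        if xor δ (decide (Odd a)) = ε then 1 else 0 := fun δ => by
    rw [finrank_ker_pow_inf_Wg_add hX hφ hψ hadj hXx hx0 hxε hiso hWg hZ ha1,
      inf_eq_right.2 (inf_le_right.trans (comap_pow_span_le_perp hX hφ hψ hadj hxy hXx ha h)),
      finrank_Vgr_inf_comap_pow_span (apply_mem_Vgr_not hX) hx0 hxε hxa]
  have hε := key ε
  have hε' := key (!ε)
  refine ⟨fun ho => ?_, fun he => ?_⟩
  · simp only [↓reduceIte, ho, decide_true, Bool.bne_true, Bool.not_eq_eq_eq_not, Bool.eq_not_self,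
      Bool.not_not, add_zero] at hε hε'
    omega
  · simp only [↓reduceIte, Nat.not_odd_iff_even.2 he, decide_false, Bool.bne_false,
      Bool.not_eq_eq_eq_not, Bool.eq_not_self, add_zero] at hε hε'
    omega

theorem finrank_ker_pow_quotient_of_Bform_ne_zero (hn : 1 ≤ n) (hB : Bform φ ψ x y ≠ 0) :
    finrank ℂ ↥(LinearMap.ker (Z ^ n) ⊓ Wg ε) + 1 =
      finrank ℂ ↥(LinearMap.ker (X ^ n) ⊓ Vgr V₀ V₁ ε) ∧
    finrank ℂ ↥(LinearMap.ker (Z ^ n) ⊓ Wg (!ε)) =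
      finrank ℂ ↥(LinearMap.ker (X ^ n) ⊓ Vgr V₀ V₁ (!ε)) := by
  have key : ∀ δ, finrank ℂ ↥(LinearMap.ker (Z ^ n) ⊓ Wg δ) + (if δ = ε then 1 else 0) =
      finrank ℂ ↥(LinearMap.ker (X ^ n) ⊓ Vgr V₀ V₁ δ) := fun δ => by
    rw [finrank_ker_pow_inf_Wg_add hX hφ hψ hadj hXx hx0 hxε hiso hWg hZ hn,
      perp_inf_comap_pow_span hX hφ hψ hadj hxy hB]
  have hε := key ε
  have hε' := key (!ε)
  simp only [↓reduceIte, Bool.not_eq_eq_eq_not, Bool.eq_not_self, add_zero] at hε hε'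
  omega

end QuotientSetting

theorem dim_ker_pow_quotient_of_lt_general
    (V₀ V₁ : Type) [AddCommGroup V₀] [Module ℂ V₀] [FiniteDimensional ℂ V₀]
    [AddCommGroup V₁] [Module ℂ V₁] [FiniteDimensional ℂ V₁]
    (φ : V₀ →ₗ[ℂ] V₀ →ₗ[ℂ] ℂ) (ψ : V₁ →ₗ[ℂ] V₁ →ₗ[ℂ] ℂ)
    (hφsymm : ∀ a b : V₀, φ a b = φ b a)
    (hψalt : ∀ a : V₁, ψ a a = 0)
    (u : V₀ →ₗ[ℂ] V₁) (ustar : V₁ →ₗ[ℂ] V₀)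
    (hadj : ∀ (v : V₀) (w : V₁), φ (ustar w) v = ψ w (u v))
    (X : Module.End ℂ (V₀ × V₁))
    (hX : ∀ p : V₀ × V₁, X p = (ustar p.2, u p.1))
    (k : ℕ) (y x : V₀ × V₁) (hxy : x = (X ^ (k - 1)) y)
    (hXx : X x = 0) (hxim : x ∉ LinearMap.range (X ^ k))
    (ε : Bool) (hxε : x ∈ Vgr V₀ V₁ ε) (hiso : Bform φ ψ x x = 0)
    (L : Submodule ℂ ↥(perp φ ψ x))
    (hL : L = Submodule.comap (perp φ ψ x).subtype (Submodule.span ℂ {x}))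
    (Wg : Bool → Submodule ℂ (↥(perp φ ψ x) ⧸ L))
    (hWg : ∀ δ : Bool, Wg δ =
      Submodule.map L.mkQ (Submodule.comap (perp φ ψ x).subtype (Vgr V₀ V₁ δ)))
    (Z : Module.End ℂ (↥(perp φ ψ x) ⧸ L))
    (hZ : ∀ z w : ↥(perp φ ψ x), (w : V₀ × V₁) = X ↑z → Z (L.mkQ z) = L.mkQ w)
    :
    (∀ y' : V₀ × V₁, (X ^ (k - 1)) y' = x → Bform φ ψ x y' = Bform φ ψ x y) ∧
    (∀ a : ℕ, 1 ≤ a → a ≤ k - 2 →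
      (Odd a →
        Module.finrank ℂ ↥(LinearMap.ker (Z ^ a) ⊓ Wg ε) + 1
            = Module.finrank ℂ ↥(LinearMap.ker (X ^ a) ⊓ Vgr V₀ V₁ ε) ∧
        Module.finrank ℂ ↥(LinearMap.ker (Z ^ a) ⊓ Wg (!ε))
            = Module.finrank ℂ ↥(LinearMap.ker (X ^ a) ⊓ Vgr V₀ V₁ (!ε)) + 1) ∧
      (Even a →
        Module.finrank ℂ ↥(LinearMap.ker (Z ^ a) ⊓ Wg ε)
            = Module.finrank ℂ ↥(LinearMap.ker (X ^ a) ⊓ Vgr V₀ V₁ ε) ∧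
        Module.finrank ℂ ↥(LinearMap.ker (Z ^ a) ⊓ Wg (!ε))
            = Module.finrank ℂ ↥(LinearMap.ker (X ^ a) ⊓ Vgr V₀ V₁ (!ε)))) ∧
    (2 ≤ k → Bform φ ψ x y ≠ 0 →
      Module.finrank ℂ ↥(LinearMap.ker (Z ^ (k - 1)) ⊓ Wg ε) + 1
          = Module.finrank ℂ ↥(LinearMap.ker (X ^ (k - 1)) ⊓ Vgr V₀ V₁ ε) ∧
      Module.finrank ℂ ↥(LinearMap.ker (Z ^ (k - 1)) ⊓ Wg (!ε))
          = Module.finrank ℂ ↥(LinearMap.ker (X ^ (k - 1)) ⊓ Vgr V₀ V₁ (!ε))) ∧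
    (2 ≤ k → Bform φ ψ x y = 0 → Odd (k - 1) →
      Module.finrank ℂ ↥(LinearMap.ker (Z ^ (k - 1)) ⊓ Wg ε) + 1
          = Module.finrank ℂ ↥(LinearMap.ker (X ^ (k - 1)) ⊓ Vgr V₀ V₁ ε) ∧
      Module.finrank ℂ ↥(LinearMap.ker (Z ^ (k - 1)) ⊓ Wg (!ε))
          = Module.finrank ℂ ↥(LinearMap.ker (X ^ (k - 1)) ⊓ Vgr V₀ V₁ (!ε)) + 1) ∧
    (2 ≤ k → Bform φ ψ x y = 0 → Even (k - 1) →
      Module.finrank ℂ ↥(LinearMap.ker (Z ^ (k - 1)) ⊓ Wg ε)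
          = Module.finrank ℂ ↥(LinearMap.ker (X ^ (k - 1)) ⊓ Vgr V₀ V₁ ε) ∧
      Module.finrank ℂ ↥(LinearMap.ker (Z ^ (k - 1)) ⊓ Wg (!ε))
          = Module.finrank ℂ ↥(LinearMap.ker (X ^ (k - 1)) ⊓ Vgr V₀ V₁ (!ε))) := by
  subst hL
  have hx0 : x ≠ 0 := fun h => hxim (h ▸ zero_mem _)
  refine ⟨fun y' hy' => ?_, fun a ha1 ha2 => ?_, fun hk hB => ?_, fun hk hB ho => ?_,
    fun hk hB he => ?_⟩
  · simpa using Bform_eq_mul_of_pow_apply_eq_smul hX hφsymm hψalt hadj hxy (c := 1)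
      (by rw [hy', one_smul])
  · exact finrank_ker_pow_quotient_of_le_perp hX hφsymm hψalt hadj hxy hXx hx0 hxε hiso hWg hZ ha1
      (by omega) (.inl (by omega))
  · exact finrank_ker_pow_quotient_of_Bform_ne_zero hX hφsymm hψalt hadj hxy hXx hx0 hxε hiso hWg
      hZ (by omega) hB
  · exact (finrank_ker_pow_quotient_of_le_perp hX hφsymm hψalt hadj hxy hXx hx0 hxε hiso hWg hZ
      (by omega) le_rfl (.inr hB)).1 ho
  · exact (finrank_ker_pow_quotient_of_le_perp hX hφsymm hψalt hadj hxy hXx hx0 hxε hiso hWg hZ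
      (by omega) le_rfl (.inr hB)).2 he

/-- In the quotient setting (`W = x^⊥/ℂx`, `Z` induced by `X`): `B(x,y)` is independent
of the choice of `y` with `X^{k−1}(y) = x`, and for `1 ≤ a ≤ k−2` (according to the
parity of `a`) and for `a = k−1 ≥ 1` (according to whether `B(x,y)` vanishes and the
parity of `k−1`), the dimensions `dim(Ker Z^a ∩ W_δ)` are as stated. -/
theorem dim_ker_pow_quotient_of_lt
    (V₀ V₁ : Type) [AddCommGroup V₀] [Module ℂ V₀] [FiniteDimensional ℂ V₀]
    [AddCommGroup V₁] [Module ℂ V₁] [FiniteDimensional ℂ V₁]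
    (φ : V₀ →ₗ[ℂ] V₀ →ₗ[ℂ] ℂ) (ψ : V₁ →ₗ[ℂ] V₁ →ₗ[ℂ] ℂ)
    (hφsymm : ∀ a b : V₀, φ a b = φ b a)
    (hφnd : ∀ a : V₀, (∀ b : V₀, φ a b = 0) → a = 0)
    (hψalt : ∀ a : V₁, ψ a a = 0)
    (hψnd : ∀ a : V₁, (∀ b : V₁, ψ a b = 0) → a = 0)
    (u : V₀ →ₗ[ℂ] V₁) (ustar : V₁ →ₗ[ℂ] V₀)
    (hadj : ∀ (v : V₀) (w : V₁), φ (ustar w) v = ψ w (u v))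
    (X : Module.End ℂ (V₀ × V₁))
    (hX : ∀ p : V₀ × V₁, X p = (ustar p.2, u p.1))
    (k : ℕ) (hk : 1 ≤ k) (y x : V₀ × V₁) (hxy : x = (X ^ (k - 1)) y)
    (hXx : X x = 0) (hxim : x ∉ LinearMap.range (X ^ k))
    (ε : Bool) (hxε : x ∈ Vgr V₀ V₁ ε) (hiso : Bform φ ψ x x = 0)
    (L : Submodule ℂ ↥(perp φ ψ x))
    (hL : L = Submodule.comap (perp φ ψ x).subtype (Submodule.span ℂ {x}))
    (Wg : Bool → Submodule ℂ (↥(perp φ ψ x) ⧸ L))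
    (hWg : ∀ δ : Bool, Wg δ =
      Submodule.map L.mkQ (Submodule.comap (perp φ ψ x).subtype (Vgr V₀ V₁ δ)))
    (Z : Module.End ℂ (↥(perp φ ψ x) ⧸ L))
    (hZ : ∀ z w : ↥(perp φ ψ x), (w : V₀ × V₁) = X ↑z → Z (L.mkQ z) = L.mkQ w)
    :
    (∀ y' : V₀ × V₁, (X ^ (k - 1)) y' = x → Bform φ ψ x y' = Bform φ ψ x y) ∧
    (∀ a : ℕ, 1 ≤ a → a ≤ k - 2 →
      (Odd a →
        Module.finrank ℂ ↥(LinearMap.ker (Z ^ a) ⊓ Wg ε) + 1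
            = Module.finrank ℂ ↥(LinearMap.ker (X ^ a) ⊓ Vgr V₀ V₁ ε) ∧
        Module.finrank ℂ ↥(LinearMap.ker (Z ^ a) ⊓ Wg (!ε))
            = Module.finrank ℂ ↥(LinearMap.ker (X ^ a) ⊓ Vgr V₀ V₁ (!ε)) + 1) ∧
      (Even a →
        Module.finrank ℂ ↥(LinearMap.ker (Z ^ a) ⊓ Wg ε)
            = Module.finrank ℂ ↥(LinearMap.ker (X ^ a) ⊓ Vgr V₀ V₁ ε) ∧
        Module.finrank ℂ ↥(LinearMap.ker (Z ^ a) ⊓ Wg (!ε))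
            = Module.finrank ℂ ↥(LinearMap.ker (X ^ a) ⊓ Vgr V₀ V₁ (!ε)))) ∧
    (2 ≤ k → Bform φ ψ x y ≠ 0 →
      Module.finrank ℂ ↥(LinearMap.ker (Z ^ (k - 1)) ⊓ Wg ε) + 1
          = Module.finrank ℂ ↥(LinearMap.ker (X ^ (k - 1)) ⊓ Vgr V₀ V₁ ε) ∧
      Module.finrank ℂ ↥(LinearMap.ker (Z ^ (k - 1)) ⊓ Wg (!ε))
          = Module.finrank ℂ ↥(LinearMap.ker (X ^ (k - 1)) ⊓ Vgr V₀ V₁ (!ε))) ∧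
    (2 ≤ k → Bform φ ψ x y = 0 → Odd (k - 1) →
      Module.finrank ℂ ↥(LinearMap.ker (Z ^ (k - 1)) ⊓ Wg ε) + 1
          = Module.finrank ℂ ↥(LinearMap.ker (X ^ (k - 1)) ⊓ Vgr V₀ V₁ ε) ∧
      Module.finrank ℂ ↥(LinearMap.ker (Z ^ (k - 1)) ⊓ Wg (!ε))
          = Module.finrank ℂ ↥(LinearMap.ker (X ^ (k - 1)) ⊓ Vgr V₀ V₁ (!ε)) + 1) ∧
    (2 ≤ k → Bform φ ψ x y = 0 → Even (k - 1) →
      Module.finrank ℂ ↥(LinearMap.ker (Z ^ (k - 1)) ⊓ Wg ε)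
          = Module.finrank ℂ ↥(LinearMap.ker (X ^ (k - 1)) ⊓ Vgr V₀ V₁ ε) ∧
      Module.finrank ℂ ↥(LinearMap.ker (Z ^ (k - 1)) ⊓ Wg (!ε))
          = Module.finrank ℂ ↥(LinearMap.ker (X ^ (k - 1)) ⊓ Vgr V₀ V₁ (!ε))) :=
  dim_ker_pow_quotient_of_lt_general V₀ V₁ φ ψ hφsymm hψalt u ustar hadj X hX k y x hxy hXx hxim ε
    hxε hiso L hL Wg hWg Z hZ
end

section
/- For every integer n ≥ 2, the admissible marked diagram consisting of the three lines (1, 0), (3, 1) and (4n−3, 0) (the diagram of the codimension-2 orbit O₂ in osp(2n+1, 2n); it has size (2n+1, 2n)) has exactly n admissible slicings. -/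
/-- A marked line is a pair `(ℓ, ε)`; a marked diagram is a finite multiset of marked lines.
`IndecompD D` says that `D` is one of the five indecomposable diagrams. -/
def IndecompD (D : Multiset (ℕ × Bool)) : Prop :=
  (∃ p : ℕ, D = {(4 * p + 1, false)}) ∨
  (∃ p : ℕ, 1 ≤ p ∧ D = {(4 * p - 1, true)}) ∨
  (∃ p : ℕ, 1 ≤ p ∧ D = {(4 * p - 1, false), (4 * p - 1, false)}) ∨
  (∃ p : ℕ, D = {(4 * p + 1, true), (4 * p + 1, true)}) ∨
  (∃ p : ℕ, 1 ≤ p ∧ D = {(2 * p, false), (2 * p, true)})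

/-- A marked diagram is admissible if it is a multiset sum of indecomposable diagrams. -/
def AdmissibleD (D : Multiset (ℕ × Bool)) : Prop :=
  ∃ L : Multiset (Multiset (ℕ × Bool)), (∀ d ∈ L, IndecompD d) ∧ L.sum = D

/-- The number of boxes of `D` labelled `b` (a line `(ℓ, ε)` has `⌈ℓ/2⌉` boxes labelled `ε`
and `⌊ℓ/2⌋` boxes labelled `1 − ε`). -/
def sizeD (b : Bool) (D : Multiset (ℕ × Bool)) : ℕ :=
  (D.map (fun l => if l.2 = b then (l.1 + 1) / 2 else l.1 / 2)).sum

/-- `D` has parity `ε` if its size is `(2m + (−1)^ε, 2m)` for some `m`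
(here `false` plays the role of `ε = 0` and `true` of `ε = 1`). -/
def HasParityD (ε : Bool) (D : Multiset (ℕ × Bool)) : Prop :=
  ∃ m : ℕ, sizeD true D = 2 * m ∧
    (if ε then sizeD false D + 1 = 2 * m else sizeD false D = 2 * m + 1)

/-- The two replacement moves applied to lines of length `k`: either replace one line
`(k, ε')` with `k ≥ 2` by `(k − 2, !ε')` (the line disappears if `k = 2`), or replace two
lines `(k, ε')`, `(k, ε'')` by `(k − 1, !ε')` and `(k − 1, ε'')` (discarded if `k = 1`). -/
def MoveAtD (k : ℕ) (D D' : Multiset (ℕ × Bool)) : Prop :=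
  (∃ ε' : Bool, 2 ≤ k ∧ (k, ε') ∈ D ∧
    D' = D.erase (k, ε') + (if k = 2 then 0 else {(k - 2, !ε')})) ∨
  (∃ ε' ε'' : Bool, (k, ε') ∈ D ∧ (k, ε'') ∈ D.erase (k, ε') ∧
    D' = (D.erase (k, ε')).erase (k, ε'') +
      (if k = 1 then 0 else {(k - 1, !ε'), (k - 1, ε'')}))

/-- `D'` is an admissible subdiagram of `D` with the removed boxes lying on lines of
length `k`. -/
def SubdiagAtD (k : ℕ) (D D' : Multiset (ℕ × Bool)) : Prop :=
  AdmissibleD D' ∧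
  sizeD false D' + sizeD true D' + 2 = sizeD false D + sizeD true D ∧
  (∃ ε : Bool, HasParityD ε D ∧ HasParityD (!ε) D') ∧
  MoveAtD k D D'

/-- `D'` is an admissible subdiagram of `D`. -/
def SubdiagD (D D' : Multiset (ℕ × Bool)) : Prop := ∃ k : ℕ, SubdiagAtD k D D'

/-- The set of admissible slicings of a diagram `D` of size `(2n+1, 2n)`: sequences
`D = D₀ ⊃ D₁ ⊃ … ⊃ D_{2n}` where each `Dᵢ` is an admissible subdiagram of `D_{i−1}`. -/
def SlicingsD (n : ℕ) (D : Multiset (ℕ × Bool)) :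
    Set (Fin (2 * n + 1) → Multiset (ℕ × Bool)) :=
  {s | s 0 = D ∧ ∀ i : Fin (2 * n), SubdiagD (s i.castSucc) (s i.succ)}

/-!
Along a slicing of `{(1,0), (3,1), (4n-3,0)}` the long line loses two boxes at a time and
changes parity. Whenever it has parity `1` one may instead cut the line `(3,1)` down to a second
`(1,0)`; the two lines `(1,0)` must then be removed together, after which a single line is left
and shrinks in the only possible way. Once the long line has become `(3,1)`, the two lines
`(3,1)` may also be cut together into `(2,0), (2,1)`, and the rest of the slicing is forced.
Every other move breaks the alternation of parities, so a slicing is determined by one of the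
`n - 1` branching points or by this special ending.
-/

section Chains

variable {α : Type*} (R : α → α → Prop)

def chainsFrom (m : ℕ) (a : α) : Set (Fin (m + 1) → α) :=
  {s | s 0 = a ∧ ∀ i : Fin m, R (s i.castSucc) (s i.succ)}

variable {R}

theorem chainsFrom_zero (a : α) : chainsFrom R 0 a = {fun _ ↦ a} := by
  ext s
  simp only [chainsFrom, IsEmpty.forall_iff, and_true, Set.mem_ofPred_eq, Set.mem_singleton_iff]
  exact ⟨fun h ↦ funext fun i ↦ by rw [Fin.fin_one_eq_zero i, h], fun h ↦ h ▸ rfl⟩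

theorem encard_chainsFrom_zero (a : α) : (chainsFrom R 0 a).encard = 1 := by
  rw [chainsFrom_zero, Set.encard_singleton]

theorem chainsFrom_succ (m : ℕ) (a : α) :
    chainsFrom R (m + 1) a = ⋃ b ∈ {b | R a b}, Matrix.vecCons a '' chainsFrom R m b := by
  ext s
  simp only [chainsFrom, Set.mem_iUnion, Set.mem_image, Set.mem_ofPred_eq, exists_prop]
  constructor
  · rintro ⟨h0, hs⟩
    refine ⟨s 1, h0 ▸ hs 0, Fin.tail s, ⟨rfl, fun i ↦ hs i.succ⟩, ?_⟩
    rw [← h0]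
    exact Fin.cons_self_tail s
  · rintro ⟨b, hab, t, ⟨rfl, ht⟩, rfl⟩
    refine ⟨rfl, Fin.cases hab fun i ↦ ?_⟩
    simpa [← Fin.succ_castSucc] using ht i

theorem encard_image_vecCons_chainsFrom (m : ℕ) (a b : α) :
    (Matrix.vecCons a '' chainsFrom R m b).encard = (chainsFrom R m b).encard :=
  (Fin.cons_right_injective (α := fun _ ↦ α) a).encard_image _

theorem encard_chainsFrom_succ_of_unique {m : ℕ} {a b : α} (h : ∀ c, R a c ↔ c = b) :
    (chainsFrom R (m + 1) a).encard = (chainsFrom R m b).encard := by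
  rw [chainsFrom_succ, show {c | R a c} = {b} from Set.ext h, Set.biUnion_singleton,
    encard_image_vecCons_chainsFrom]

theorem encard_chainsFrom_succ_of_pair {m : ℕ} {a b₁ b₂ : α}
    (h : ∀ c, R a c ↔ c = b₁ ∨ c = b₂) (hb : b₁ ≠ b₂) :
    (chainsFrom R (m + 1) a).encard =
      (chainsFrom R m b₁).encard + (chainsFrom R m b₂).encard := by
  rw [chainsFrom_succ, show {c | R a c} = {b₁, b₂} from Set.ext h, Set.biUnion_insert,
    Set.biUnion_singleton, Set.encard_union_eq, encard_image_vecCons_chainsFrom,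
    encard_image_vecCons_chainsFrom]
  rw [Set.disjoint_left]
  rintro _ ⟨s, ⟨hs, -⟩, rfl⟩ ⟨t, ⟨ht, -⟩, hst⟩
  exact hb (by simpa [hs, ht] using (congrFun hst 1).symm)

end Chains

section Diagrams

open Multiset

@[simp]
theorem sizeD_cons (b : Bool) (x : ℕ × Bool) (D : Multiset (ℕ × Bool)) :
    sizeD b (x ::ₘ D) = (if x.2 = b then (x.1 + 1) / 2 else x.1 / 2) + sizeD b D := by
  simp [sizeD]

@[simp]
theorem sizeD_add (b : Bool) (D E : Multiset (ℕ × Bool)) :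
    sizeD b (D + E) = sizeD b D + sizeD b E := by
  simp [sizeD]

@[simp]
theorem sizeD_singleton (b : Bool) (x : ℕ × Bool) :
    sizeD b {x} = if x.2 = b then (x.1 + 1) / 2 else x.1 / 2 := by
  simp [sizeD]

theorem hasParityD_iff {ε : Bool} {D : Multiset (ℕ × Bool)} :
    HasParityD ε D ↔ sizeD true D % 2 = 0 ∧
      if ε then sizeD false D + 1 = sizeD true D else sizeD false D = sizeD true D + 1 := by
  cases ε <;> simp only [HasParityD, Bool.false_eq_true, ↓reduceIte] <;>
    exact ⟨fun ⟨m, h, h'⟩ ↦ by omega, fun h ↦ ⟨sizeD true D / 2, by omega, by omega⟩⟩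

/-- For `k = 0` the pair move would replace two empty lines by two empty lines. -/
theorem MoveAtD.sizeD_add_two {k : ℕ} {D D' : Multiset (ℕ × Bool)} (h : MoveAtD k D D')
    (hk : k ≠ 0) : sizeD false D' + sizeD true D' + 2 = sizeD false D + sizeD true D := by
  rcases h with ⟨e, hk2, hmem, rfl⟩ | ⟨e, e', hmem, hmem', rfl⟩
  · obtain ⟨E, rfl⟩ := exists_cons_of_mem hmem
    split_ifs <;> cases e <;> simp <;> omega
  · obtain ⟨E, rfl⟩ := exists_cons_of_mem hmem
    rw [erase_cons_head] at hmem' ⊢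
    obtain ⟨F, rfl⟩ := exists_cons_of_mem hmem'
    split_ifs <;> cases e <;> cases e' <;> simp <;> omega

theorem admissibleD_of_indecompD {D : Multiset (ℕ × Bool)} (h : IndecompD D) :
    AdmissibleD D :=
  ⟨{D}, by simpa using h, by simp⟩

theorem AdmissibleD.add {D₁ D₂ : Multiset (ℕ × Bool)} (h₁ : AdmissibleD D₁)
    (h₂ : AdmissibleD D₂) : AdmissibleD (D₁ + D₂) := by
  obtain ⟨L₁, hL₁, rfl⟩ := h₁
  obtain ⟨L₂, hL₂, rfl⟩ := h₂
  exact ⟨L₁ + L₂, fun d hd ↦ (mem_add.1 hd).elim (hL₁ d) (hL₂ d), sum_add _ _⟩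

theorem AdmissibleD.cons {x : ℕ × Bool} {D : Multiset (ℕ × Bool)} (hx : IndecompD {x})
    (hD : AdmissibleD D) : AdmissibleD (x ::ₘ D) := by
  simpa using (admissibleD_of_indecompD hx).add hD

theorem indecompD_singleton_false (p : ℕ) : IndecompD {(4 * p + 1, false)} :=
  Or.inl ⟨p, rfl⟩

theorem indecompD_singleton_true (p : ℕ) : IndecompD {(4 * p + 3, true)} :=
  Or.inr <| Or.inl ⟨p + 1, by omega, by simp; omega⟩

theorem indecompD_one_true_one_true : IndecompD {(1, true), (1, true)} :=
  Or.inr <| Or.inr <| Or.inr <| Or.inl ⟨0, rfl⟩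

theorem indecompD_two_false_two_true : IndecompD {(2, false), (2, true)} :=
  Or.inr <| Or.inr <| Or.inr <| Or.inr ⟨1, le_rfl, rfl⟩

theorem SubdiagD.of_moveAtD {k : ℕ} {D D' : Multiset (ℕ × Bool)} (hk : k ≠ 0)
    (hmove : MoveAtD k D D') (hadm : AdmissibleD D') (ε : Bool) (hpar : HasParityD ε D)
    (hpar' : HasParityD (!ε) D') : SubdiagD D D' :=
  ⟨k, hadm, hmove.sizeD_add_two hk, ⟨ε, hpar, hpar'⟩, hmove⟩

/- In the forward directions below, every move allowed by `MoveAtD` is enumerated; the moves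
not listed need lines that are absent or break the alternation of parities. Writing singletons
as `x ::ₘ 0` lets `simp` sort the lines of a diagram with `cons_swap`. -/

theorem subdiagD_singleton_false_iff (k : ℕ) (D' : Multiset (ℕ × Bool)) :
    SubdiagD {(4 * k + 5, false)} D' ↔ D' = {(4 * k + 3, true)} := by
  constructor
  · rintro ⟨j, -, -, -, ⟨e, hj, hmem, rfl⟩ | ⟨e, e', hmem, hmem', rfl⟩⟩ <;>
      simp at hmem <;> obtain ⟨rfl, rfl⟩ := hmem <;> simp at *
  · rintro rfl
    refine .of_moveAtD (k := 4 * k + 5) (by omega) (.inl ⟨false, by omega, by simp, by simp⟩)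
      (admissibleD_of_indecompD (indecompD_singleton_true k)) false ?_ ?_ <;>
      simp [hasParityD_iff] <;> omega

theorem subdiagD_singleton_true_iff (k : ℕ) (D' : Multiset (ℕ × Bool)) :
    SubdiagD {(4 * k + 3, true)} D' ↔ D' = {(4 * k + 1, false)} := by
  constructor
  · rintro ⟨j, -, -, -, ⟨e, hj, hmem, rfl⟩ | ⟨e, e', hmem, hmem', rfl⟩⟩ <;>
      simp at hmem <;> obtain ⟨rfl, rfl⟩ := hmem <;> simp at *
  · rintro rfl
    refine .of_moveAtD (k := 4 * k + 3) (by omega) (.inl ⟨true, by omega, by simp, by simp⟩)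
      (admissibleD_of_indecompD (indecompD_singleton_false k)) true ?_ ?_ <;>
      simp [hasParityD_iff] <;> omega

theorem subdiagD_one_three_false_iff (k : ℕ) (D' : Multiset (ℕ × Bool)) :
    SubdiagD {(1, false), (3, true), (4 * k + 5, false)} D' ↔
      D' = {(1, false), (3, true), (4 * k + 3, true)} := by
  constructor
  · rintro ⟨j, -, -, ⟨ε, hpar, hpar'⟩, ⟨e, hj, hmem, rfl⟩ | ⟨e, e', hmem, hmem', rfl⟩⟩ <;>
      [skip; cases e'] <;> simp at hmem <;>
      rcases hmem with ⟨rfl, rfl⟩ | ⟨rfl, rfl⟩ | ⟨rfl, rfl⟩ <;>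
      simp [erase_cons_tail, ← cons_zero, cons_swap] at *
    cases ε <;> simp [hasParityD_iff] at hpar hpar' <;> omega
  · rintro rfl
    refine .of_moveAtD (k := 4 * k + 5) (by omega)
      (.inl ⟨false, by omega, by simp, by simp [erase_cons_tail, ← cons_zero, cons_swap]⟩)
      (.cons (indecompD_singleton_false 0) (.cons (indecompD_singleton_true 0)
        (admissibleD_of_indecompD (indecompD_singleton_true k)))) false ?_ ?_ <;>
      simp [hasParityD_iff] <;> omega

theorem subdiagD_one_three_true_iff (k : ℕ) (D' : Multiset (ℕ × Bool)) :
    SubdiagD {(1, false), (3, true), (4 * k + 7, true)} D' ↔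
      D' = {(1, false), (3, true), (4 * k + 5, false)} ∨
        D' = {(1, false), (1, false), (4 * k + 7, true)} := by
  constructor
  · rintro ⟨j, -, -, -, ⟨e, hj, hmem, rfl⟩ | ⟨e, e', hmem, hmem', rfl⟩⟩ <;>
      [skip; cases e'] <;> simp at hmem <;>
      rcases hmem with ⟨rfl, rfl⟩ | ⟨rfl, rfl⟩ | ⟨rfl, rfl⟩ <;>
      simp [erase_cons_tail, ← cons_zero, cons_swap] at *
  · rintro (rfl | rfl)
    · refine .of_moveAtD (k := 4 * k + 7) (by omega)
        (.inl ⟨true, by omega, by simp, by simp [erase_cons_tail, ← cons_zero, cons_swap]⟩)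
        (.cons (indecompD_singleton_false 0) (.cons (indecompD_singleton_true 0)
          (admissibleD_of_indecompD (indecompD_singleton_false (k + 1))))) true ?_ ?_ <;>
        simp [hasParityD_iff] <;> omega
    · refine .of_moveAtD (k := 3) (by omega)
        (.inl ⟨true, by omega, by simp, by simp [erase_cons_tail, ← cons_zero]⟩)
        (.cons (indecompD_singleton_false 0) (.cons (indecompD_singleton_false 0)
          (admissibleD_of_indecompD (indecompD_singleton_true (k + 1))))) true ?_ ?_ <;>
        simp [hasParityD_iff] <;> omega

theorem subdiagD_one_three_three_iff (D' : Multiset (ℕ × Bool)) :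
    SubdiagD {(1, false), (3, true), (3, true)} D' ↔
      D' = {(1, false), (1, false), (3, true)} ∨ D' = {(1, false), (2, false), (2, true)} := by
  constructor
  · rintro ⟨j, -, -, -, ⟨e, hj, hmem, rfl⟩ | ⟨e, e', hmem, hmem', rfl⟩⟩ <;>
      [skip; cases e'] <;> simp at hmem <;>
      rcases hmem with ⟨rfl, rfl⟩ | ⟨rfl, rfl⟩ <;>
      simp [erase_cons_tail, ← cons_zero, cons_swap] at *
  · rintro (rfl | rfl)
    · refine .of_moveAtD (k := 3) (by omega)
        (.inl ⟨true, by omega, by simp, by simp [erase_cons_tail, ← cons_zero]⟩)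
        (.cons (indecompD_singleton_false 0) (.cons (indecompD_singleton_false 0)
          (admissibleD_of_indecompD (indecompD_singleton_true 0)))) true ?_ ?_ <;>
        simp [hasParityD_iff]
    · refine .of_moveAtD (k := 3) (by omega) (.inr ⟨true, true, by simp, by simp, by decide⟩)
        (.cons (indecompD_singleton_false 0)
          (admissibleD_of_indecompD indecompD_two_false_two_true)) true ?_ ?_ <;>
        simp [hasParityD_iff]

theorem subdiagD_one_one_true_iff (k : ℕ) (D' : Multiset (ℕ × Bool)) :
    SubdiagD {(1, false), (1, false), (4 * k + 3, true)} D' ↔ D' = {(4 * k + 3, true)} := by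
  constructor
  · rintro ⟨j, -, -, ⟨ε, hpar, hpar'⟩, ⟨e, hj, hmem, rfl⟩ | ⟨e, e', hmem, hmem', rfl⟩⟩ <;>
      [skip; cases e'] <;> simp at hmem <;>
      rcases hmem with ⟨rfl, rfl⟩ | ⟨rfl, rfl⟩ <;>
      simp [erase_cons_tail, ← cons_zero, cons_swap] at *
    cases ε <;> simp [hasParityD_iff] at hpar hpar' <;> omega
  · rintro rfl
    refine .of_moveAtD (k := 1) (by omega) (.inr ⟨false, false, by simp, by simp, by simp⟩)
      (admissibleD_of_indecompD (indecompD_singleton_true k)) false ?_ ?_ <;>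
      simp [hasParityD_iff] <;> omega

theorem subdiagD_one_two_two_iff (D' : Multiset (ℕ × Bool)) :
    SubdiagD {(1, false), (2, false), (2, true)} D' ↔ D' = {(1, false), (1, true), (1, true)} := by
  constructor
  · rintro ⟨j, -, -, ⟨ε, hpar, hpar'⟩, ⟨e, hj, hmem, rfl⟩ | ⟨e, e', hmem, hmem', rfl⟩⟩ <;>
      [skip; cases e'] <;> simp at hmem <;>
      rcases hmem with ⟨rfl, rfl⟩ | ⟨rfl, rfl⟩ | ⟨rfl, rfl⟩ <;>
      simp [erase_cons_tail, ← cons_zero, cons_swap] at * <;>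
      cases ε <;> simp [hasParityD_iff] at hpar hpar'
  · rintro rfl
    refine .of_moveAtD (k := 2) (by omega) (.inr ⟨false, true, by simp, by simp, by decide⟩)
      (.cons (indecompD_singleton_false 0)
        (admissibleD_of_indecompD indecompD_one_true_one_true)) false ?_ ?_ <;>
      simp [hasParityD_iff]

theorem subdiagD_one_one_one_iff (D' : Multiset (ℕ × Bool)) :
    SubdiagD {(1, false), (1, true), (1, true)} D' ↔ D' = {(1, false)} := by
  constructor
  · rintro ⟨j, -, -, ⟨ε, hpar, hpar'⟩, ⟨e, hj, hmem, rfl⟩ | ⟨e, e', hmem, hmem', rfl⟩⟩ <;>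
      [skip; cases e'] <;> simp at hmem <;>
      rcases hmem with ⟨rfl, rfl⟩ | ⟨rfl, rfl⟩ <;>
      simp [erase_cons_tail, ← cons_zero] at * <;>
      cases ε <;> simp [hasParityD_iff] at hpar hpar'
  · rintro rfl
    refine .of_moveAtD (k := 1) (by omega) (.inr ⟨true, true, by simp, by simp, by decide⟩)
      (admissibleD_of_indecompD (indecompD_singleton_false 0)) true ?_ ?_ <;>
      simp [hasParityD_iff]

end Diagrams

theorem encard_chainsFrom_singleton_false (k : ℕ) :
    (chainsFrom SubdiagD (2 * k) {(4 * k + 1, false)}).encard = 1 := by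
  induction k with
  | zero => exact encard_chainsFrom_zero _
  | succ k ih =>
    rw [show 2 * (k + 1) = 2 * k + 1 + 1 by ring, show 4 * (k + 1) + 1 = 4 * k + 5 by ring,
      encard_chainsFrom_succ_of_unique (subdiagD_singleton_false_iff k),
      encard_chainsFrom_succ_of_unique (subdiagD_singleton_true_iff k), ih]

theorem encard_chainsFrom_one_one_true (k : ℕ) :
    (chainsFrom SubdiagD (2 * k + 2) {(1, false), (1, false), (4 * k + 3, true)}).encard = 1 := by
  rw [encard_chainsFrom_succ_of_unique (subdiagD_one_one_true_iff k),
    encard_chainsFrom_succ_of_unique (subdiagD_singleton_true_iff k),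
    encard_chainsFrom_singleton_false]

theorem encard_chainsFrom_one_three_true (k : ℕ) :
    (chainsFrom SubdiagD (2 * k + 3) {(1, false), (3, true), (4 * k + 3, true)}).encard =
      (k + 2 : ℕ) := by
  induction k with
  | zero =>
    rw [encard_chainsFrom_succ_of_pair subdiagD_one_three_three_iff (by decide),
      encard_chainsFrom_one_one_true 0,
      encard_chainsFrom_succ_of_unique subdiagD_one_two_two_iff,
      encard_chainsFrom_succ_of_unique subdiagD_one_one_one_iff, encard_chainsFrom_zero]
    rfl
  | succ k ih =>
    rw [show 2 * (k + 1) + 3 = 2 * k + 4 + 1 by ring, show 4 * (k + 1) + 3 = 4 * k + 7 by ring,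
      encard_chainsFrom_succ_of_pair (subdiagD_one_three_true_iff k)
        (fun h ↦ by simpa using congrArg ((3, true) ∈ ·) h),
      encard_chainsFrom_succ_of_unique (subdiagD_one_three_false_iff k), ih,
      show 2 * k + 4 = 2 * (k + 1) + 2 by ring, show 4 * k + 7 = 4 * (k + 1) + 3 by ring,
      encard_chainsFrom_one_one_true]
    push_cast
    ring

/-- For `n ≥ 2`, the diagram of the codimension-2 orbit `O₂` of `osp(2n+1, 2n)`, with
lines `(1,0)`, `(3,1)` and `(4n−3, 0)`, has exactly `n` admissible slicings. -/
theorem n_slicings_of_orbit_O2 (n : ℕ) (hn : 2 ≤ n) :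
    (SlicingsD n ({(1, false), (3, true), (4 * n - 3, false)} : Multiset (ℕ × Bool))).ncard
      = n := by
  obtain ⟨k, rfl⟩ := Nat.exists_eq_add_of_le' hn
  have h : SlicingsD (k + 2) {(1, false), (3, true), (4 * (k + 2) - 3, false)} =
      chainsFrom SubdiagD (2 * k + 3 + 1) {(1, false), (3, true), (4 * k + 5, false)} := by
    rw [show 4 * (k + 2) - 3 = 4 * k + 5 by omega]
    rfl
  rw [Set.ncard_def, h, encard_chainsFrom_succ_of_unique (subdiagD_one_three_false_iff k),
    encard_chainsFrom_one_three_true, ENat.toNat_natCast]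
end
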